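/- arXiv:2210.14356 — 2 statements merged into one kernel-verified Lean document; each statement's English description precedes it below -/
import Mathlib

section
/- Let ρ : ℝ → ℝ be C¹, convex, with ρ(s) = 0 for s ≤ 0 and 0 ≤ ρ' ≤ γ for a constant γ > 0. Define W(A) = (1/2)|A|² + ρ(det A) for A ∈ ℝ^{2×2}. Then for all A, B ∈ ℝ^{2×2}, the monotonicity inequality (∇W(A) − ∇W(B))·(A − B) ≥ (1 − γ)|A − B|² holds, where ∇W(A) = A + ρ'(det A) cof(A). -/
/-!
With `M = A - B`, `a = ρ'(det A)` and `b = ρ'(det B)`, the identities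
`cof A · M = det A - det B + det M` and `cof B · M = det A - det B - det M` turn the pairing into
`|M|² + (a - b)(det A - det B) + (a + b) det M`. The middle term is nonnegative because `ρ'` is
monotone (`ρ` is convex), and the last is at least `-γ|M|²` because `0 ≤ a + b ≤ 2γ` and
`|det M| ≤ |M|² / 2`.
-/

/-- The cofactor matrix of a 2×2 real matrix. -/
def cof (A : Matrix (Fin 2) (Fin 2) ℝ) : Matrix (Fin 2) (Fin 2) ℝ :=
  !![A 1 1, -(A 1 0); -(A 0 1), A 0 0]

/-- The Frobenius inner product of two 2×2 real matrices. -/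
def finner (M N : Matrix (Fin 2) (Fin 2) ℝ) : ℝ :=
  ∑ i : Fin 2, ∑ j : Fin 2, M i j * N i j

/-- The gradient of W(A) = (1/2)|A|² + ρ(det A), namely ∇W(A) = A + ρ'(det A) cof A. -/
noncomputable def gradW (ρ : ℝ → ℝ) (A : Matrix (Fin 2) (Fin 2) ℝ) :
    Matrix (Fin 2) (Fin 2) ℝ :=
  A + deriv ρ A.det • cof A

lemma finner_add_left (M N P : Matrix (Fin 2) (Fin 2) ℝ) :
    finner (M + N) P = finner M P + finner N P := by
  simp only [finner, Matrix.add_apply, add_mul, Finset.sum_add_distrib]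

lemma finner_sub_left (M N P : Matrix (Fin 2) (Fin 2) ℝ) :
    finner (M - N) P = finner M P - finner N P := by
  simp only [finner, Matrix.sub_apply, sub_mul, Finset.sum_sub_distrib]

lemma finner_smul_left (c : ℝ) (M N : Matrix (Fin 2) (Fin 2) ℝ) :
    finner (c • M) N = c * finner M N := by
  simp only [finner, Matrix.smul_apply, smul_eq_mul, mul_assoc, Finset.mul_sum]

lemma finner_self (N : Matrix (Fin 2) (Fin 2) ℝ) : finner N N = ∑ i, ∑ j, N i j ^ 2 := by
  simp only [finner, sq]

lemma finner_cof_sub_left (A B : Matrix (Fin 2) (Fin 2) ℝ) :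
    finner (cof A) (A - B) = A.det - B.det + (A - B).det := by
  simp only [finner, cof, Fin.sum_univ_two, Matrix.det_fin_two, Matrix.sub_apply, Matrix.of_apply,
    Matrix.cons_val', Matrix.cons_val_fin_one, Matrix.cons_val_zero, Matrix.cons_val_one]
  ring

lemma finner_cof_sub_right (A B : Matrix (Fin 2) (Fin 2) ℝ) :
    finner (cof B) (A - B) = A.det - B.det - (A - B).det := by
  simp only [finner, cof, Fin.sum_univ_two, Matrix.det_fin_two, Matrix.sub_apply, Matrix.of_apply,
    Matrix.cons_val', Matrix.cons_val_fin_one, Matrix.cons_val_zero, Matrix.cons_val_one]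
  ring

lemma abs_det_le_half_finner_self (N : Matrix (Fin 2) (Fin 2) ℝ) :
    |N.det| ≤ finner N N / 2 := by
  rw [finner_self, Matrix.det_fin_two, abs_le]
  simp only [Fin.sum_univ_two]
  constructor <;> nlinarith [sq_nonneg (N 0 0 + N 1 1), sq_nonneg (N 0 1 - N 1 0),
    sq_nonneg (N 0 0 - N 1 1), sq_nonneg (N 0 1 + N 1 0)]

lemma finner_gradW_sub (ρ : ℝ → ℝ) (A B : Matrix (Fin 2) (Fin 2) ℝ) :
    finner (gradW ρ A - gradW ρ B) (A - B) = finner (A - B) (A - B)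
      + (deriv ρ A.det - deriv ρ B.det) * (A.det - B.det)
      + (deriv ρ A.det + deriv ρ B.det) * (A - B).det := by
  have hsplit : gradW ρ A - gradW ρ B = (A - B) + deriv ρ A.det • cof A - deriv ρ B.det • cof B := by
    simp only [gradW]; abel
  rw [hsplit, finner_sub_left, finner_add_left, finner_smul_left, finner_smul_left,
    finner_cof_sub_left, finner_cof_sub_right]
  ring

theorem gradW_monotone_general (ρ : ℝ → ℝ) (γ : ℝ)
    (hρ : ContDiff ℝ 1 ρ) (hconv : ConvexOn ℝ Set.univ ρ)
    (hbound : ∀ s : ℝ, 0 ≤ deriv ρ s ∧ deriv ρ s ≤ γ)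
    (A B : Matrix (Fin 2) (Fin 2) ℝ) :
    (1 - γ) * ∑ i : Fin 2, ∑ j : Fin 2, (A i j - B i j) ^ 2 ≤
      finner (gradW ρ A - gradW ρ B) (A - B) := by
  have hmono : Monotone (deriv ρ) := monotoneOn_univ.mp <|
    hconv.monotoneOn_deriv fun x _ ↦ (hρ.differentiable one_ne_zero).differentiableAt
  have hdet : 0 ≤ (deriv ρ A.det - deriv ρ B.det) * (A.det - B.det) :=
    (hmono.monovary monotone_id).sub_mul_sub_nonneg B.det A.det
  have hcross : -γ * finner (A - B) (A - B) ≤ (deriv ρ A.det + deriv ρ B.det) * (A - B).det := by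
    obtain ⟨ha₀, haγ⟩ := hbound A.det
    obtain ⟨hb₀, hbγ⟩ := hbound B.det
    have hN := abs_det_le_half_finner_self (A - B)
    nlinarith [neg_abs_le (A - B).det, abs_nonneg (A - B).det]
  have hnorm : finner (A - B) (A - B) = ∑ i : Fin 2, ∑ j : Fin 2, (A i j - B i j) ^ 2 := by
    simp only [finner_self, Matrix.sub_apply]
  rw [finner_gradW_sub, ← hnorm]
  linarith

/-- Monotonicity inequality: (∇W(A) − ∇W(B))·(A − B) ≥ (1 − γ)|A − B|². -/
theorem gradW_monotone (ρ : ℝ → ℝ) (γ : ℝ) (hγ : 0 < γ)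
    (hρ : ContDiff ℝ 1 ρ) (hconv : ConvexOn ℝ Set.univ ρ)
    (hzero : ∀ s ≤ (0 : ℝ), ρ s = 0)
    (hbound : ∀ s : ℝ, 0 ≤ deriv ρ s ∧ deriv ρ s ≤ γ)
    (A B : Matrix (Fin 2) (Fin 2) ℝ) :
    (1 - γ) * ∑ i : Fin 2, ∑ j : Fin 2, (A i j - B i j) ^ 2 ≤
      finner (gradW ρ A - gradW ρ B) (A - B) :=
  gradW_monotone_general ρ γ hρ hconv hbound A B
end

section
/- Let r ∈ W^{1,2}_loc((0,1]) with r ∈ L²((0,1), R^{-1} dR) and ṙ ∈ L²((0,1), R dR). Then lim_{R→0} r(R) = 0, i.e. r extends continuously to [0,1] with r(0) = 0. -/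
open MeasureTheory Filter

lemma tail_small (g : ℝ → ℝ) (hg : IntegrableOn g (Set.Ioo 0 1)) {ε : ℝ} (hε : 0 < ε) :
    ∃ δ : ℝ, 0 < δ ∧ δ ≤ 1 ∧ ∫ x in Set.Ioo 0 δ, g x < ε := by
  have h_anti : Antitone (fun n : ℕ => Set.Ioo (0:ℝ) (1 / (n + 1))) := by
    intro m n hmn
    apply Set.Ioo_subset_Ioo le_rfl
    apply one_div_le_one_div_of_le (by positivity)
    have : (m:ℝ) ≤ n := by exact_mod_cast hmn
    linarith
  have htend := tendsto_setIntegral_of_antitone (f := g) (μ := volume)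
    (fun n : ℕ => measurableSet_Ioo) h_anti
    ⟨0, by simpa using hg⟩
  have hempty : (⋂ n : ℕ, Set.Ioo (0:ℝ) (1 / (n + 1))) = ∅ := by
    ext x
    simp only [Set.mem_iInter, Set.mem_Ioo, Set.mem_empty_iff_false, iff_false, not_forall]
    by_contra h
    push_neg at h
    obtain ⟨hx0, hx⟩ := h 0
    obtain ⟨n, hn⟩ := exists_nat_one_div_lt hx0
    exact absurd (h n).2 (not_lt.mpr hn.le)
  rw [hempty, setIntegral_empty] at htend
  obtain ⟨n, hn⟩ := (htend.eventually (eventually_lt_nhds hε)).exists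
  refine ⟨1 / (n + 1), by positivity, ?_, hn⟩
  rw [div_le_one (by positivity)]
  linarith [Nat.cast_nonneg (α := ℝ) n]

lemma amgm_div {a t l : ℝ} (ht : 0 < t) (hl : 0 < l) :
    |a| ≤ l / 2 * (a ^ 2 * t) + 1 / (2 * l) * (1 / t) := by
  have key : 2 * (l * t) * |a| ≤ (l * t) ^ 2 * a ^ 2 + 1 := by
    nlinarith [sq_nonneg (l * t * |a| - 1), sq_abs a]
  have hlt : 0 < 2 * (l * t) := by positivity
  calc |a| = (2 * (l * t) * |a|) / (2 * (l * t)) := by field_simp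
    _ ≤ ((l * t) ^ 2 * a ^ 2 + 1) / (2 * (l * t)) := by gcongr
    _ = l / 2 * (a ^ 2 * t) + 1 / (2 * l) * (1 / t) := by field_simp

/-- If r is locally absolutely continuous on (0,1] with derivative r' (in the sense of
the fundamental theorem of calculus), r ∈ L²((0,1), R⁻¹dR) and ṙ ∈ L²((0,1), R dR),
then r(R) → 0 as R → 0⁺. -/
theorem radial_limit_zero (r r' : ℝ → ℝ) (hm : Measurable r')
    (hftc : ∀ a b : ℝ, 0 < a → a ≤ b → b ≤ 1 → r b - r a = ∫ t in a..b, r' t)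
    (h1 : IntegrableOn (fun R => r R ^ 2 / R) (Set.Ioo 0 1))
    (h2 : IntegrableOn (fun R => r' R ^ 2 * R) (Set.Ioo 0 1)) :
    Filter.Tendsto r (nhdsWithin 0 (Set.Ioi 0)) (nhds 0) := by
  rw [Metric.tendsto_nhdsWithin_nhds]
  intro ε hε
  set L := Real.log 2 with hLdef
  have hL0 : 0 < L := Real.log_pos (by norm_num)
  set lam := 3 * L / ε with hlamdef
  have hlam : 0 < lam := by positivity
  obtain ⟨δ1, hδ1pos, hδ11, hδ1⟩ := tail_small _ h2 (ε := 2 * ε / (3 * lam)) (by positivity)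
  obtain ⟨δ2, hδ2pos, hδ21, hδ2⟩ := tail_small _ h1 (ε := (ε / 3) ^ 2 * L) (by positivity)
  set δ := min δ1 δ2 with hδdef
  have hδpos : 0 < δ := lt_min hδ1pos hδ2pos
  refine ⟨δ / 2, by positivity, ?_⟩
  intro x hx hdist
  rw [Real.dist_eq, sub_zero] at hdist
  have hx0 : 0 < x := hx
  have hxδ : x < δ / 2 := lt_of_abs_lt hdist
  have h2x1 : 2 * x < 1 := by
    have := min_le_left δ1 δ2
    have := min_le_right δ1 δ2
    linarith [hδ11, hδ21]
  have h2xδ1 : 2 * x < δ1 := by have := min_le_left δ1 δ2; linarith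
  have h2xδ2 : 2 * x < δ2 := by have := min_le_right δ1 δ2; linarith
  -- Step 1 : find s ∈ [x, 2x] with r s ^ 2 ≤ (ε/3)^2
  have hstep1 : ∃ s ∈ Set.Icc x (2 * x), r s ^ 2 ≤ (ε / 3) ^ 2 := by
    by_contra hcon
    push_neg at hcon
    have hsub01 : Set.Ioo x (2 * x) ⊆ Set.Ioo (0:ℝ) 1 :=
      Set.Ioo_subset_Ioo hx0.le h2x1.le
    have hint_sub : IntegrableOn (fun R => r R ^ 2 / R) (Set.Ioo x (2 * x)) :=
      h1.mono_set hsub01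
    have hconst : IntegrableOn (fun t => (ε / 3) ^ 2 * (1 / t)) (Set.Ioo x (2 * x)) :=
      ((continuousOn_const.mul (continuousOn_const.div continuousOn_id
        (fun t ht => ne_of_gt (lt_of_lt_of_le hx0 ht.1)))).integrableOn_Icc).mono_set
        Set.Ioo_subset_Icc_self
    have hmono := setIntegral_mono_on hconst hint_sub measurableSet_Ioo
      (fun t ht => by
        have ht0 : 0 < t := lt_trans hx0 ht.1
        have := (hcon t ⟨ht.1.le, ht.2.le⟩).le
        rw [mul_one_div]
        gcongr)
    have hcalc : ∫ t in Set.Ioo x (2 * x), (ε / 3) ^ 2 * (1 / t) = (ε / 3) ^ 2 * L := by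
      rw [integral_const_mul]
      congr 1
      rw [← integral_Ioc_eq_integral_Ioo, ← intervalIntegral.integral_of_le (by linarith)]
      rw [integral_one_div]
      · rw [mul_div_assoc, div_self (ne_of_gt hx0), mul_one]
      · intro h
        rcases Set.mem_uIcc.mp h with h' | h' <;> linarith [h'.1, h'.2]
    have hsub2 : Set.Ioo x (2 * x) ⊆ Set.Ioo (0:ℝ) δ2 :=
      Set.Ioo_subset_Ioo hx0.le h2xδ2.le
    have hnn : 0 ≤ᵐ[volume.restrict (Set.Ioo (0:ℝ) δ2)] fun R => r R ^ 2 / R := by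
      have : ∀ᵐ t ∂volume.restrict (Set.Ioo (0:ℝ) δ2), 0 ≤ r t ^ 2 / t := by
        rw [ae_restrict_iff' measurableSet_Ioo]
        exact Eventually.of_forall fun t ht => by have := ht.1; positivity
      exact this
    have hchain : ∫ t in Set.Ioo x (2 * x), r t ^ 2 / t ≤
        ∫ t in Set.Ioo (0:ℝ) δ2, r t ^ 2 / t :=
      setIntegral_mono_set (h1.mono_set (Set.Ioo_subset_Ioo le_rfl hδ21)) hnn
        (HasSubset.Subset.eventuallyLE hsub2)
    rw [hcalc] at hmono
    linarith
  obtain ⟨s, hs, hrs2⟩ := hstep1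
  have hrs : |r s| ≤ ε / 3 := by
    nlinarith [sq_abs (r s), abs_nonneg (r s)]
  -- Step 2 : bound the increment
  have hIoc1 : Set.Ioc x (2 * x) ⊆ Set.Ioo (0:ℝ) 1 := fun t ht =>
    ⟨lt_trans hx0 ht.1, lt_of_le_of_lt ht.2 h2x1⟩
  have hi2 : IntegrableOn (fun t => r' t ^ 2 * t) (Set.Ioc x (2 * x)) := h2.mono_set hIoc1
  have hi1t : IntegrableOn (fun t => 1 / t) (Set.Ioc x (2 * x)) :=
    ((continuousOn_const.div continuousOn_id
      (fun t ht => ne_of_gt (lt_of_lt_of_le hx0 ht.1)) :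
        ContinuousOn (fun t => 1 / t) (Set.Icc x (2 * x))).integrableOn_Icc).mono_set
      Set.Ioc_subset_Icc_self
  have hBint : IntegrableOn
      (fun t => lam / 2 * (r' t ^ 2 * t) + 1 / (2 * lam) * (1 / t)) (Set.Ioc x (2 * x)) :=
    (hi2.const_mul _).add (hi1t.const_mul _)
  have hbound : IntegrableOn r' (Set.Ioc x (2 * x)) := by
    apply Integrable.mono' hBint (hm.aestronglyMeasurable.restrict)
    rw [ae_restrict_iff' measurableSet_Ioc]
    exact Eventually.of_forall fun t ht =>
      amgm_div (lt_trans hx0 ht.1) hlam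
  have hIoc_log : ∫ t in Set.Ioc x (2 * x), 1 / t = L := by
    rw [← intervalIntegral.integral_of_le (by linarith)]
    rw [integral_one_div]
    · rw [mul_div_assoc, div_self (ne_of_gt hx0), mul_one]
    · intro h
      rcases Set.mem_uIcc.mp h with h' | h' <;> linarith [h'.1, h'.2]
  have hIoc_sq : ∫ t in Set.Ioc x (2 * x), r' t ^ 2 * t ≤ 2 * ε / (3 * lam) := by
    have hnn : 0 ≤ᵐ[volume.restrict (Set.Ioo (0:ℝ) δ1)] fun t => r' t ^ 2 * t := by
      have : ∀ᵐ t ∂volume.restrict (Set.Ioo (0:ℝ) δ1), 0 ≤ r' t ^ 2 * t := by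
        rw [ae_restrict_iff' measurableSet_Ioo]
        exact Eventually.of_forall fun t ht => by have := ht.1; positivity
      exact this
    have hsub : Set.Ioc x (2 * x) ⊆ Set.Ioo (0:ℝ) δ1 := fun t ht =>
      ⟨lt_trans hx0 ht.1, lt_of_le_of_lt ht.2 h2xδ1⟩
    have := setIntegral_mono_set (h2.mono_set (Set.Ioo_subset_Ioo le_rfl hδ11)) hnn
      (HasSubset.Subset.eventuallyLE hsub)
    linarith
  have hxs : x ≤ s := hs.1
  have hs1 : s ≤ 1 := le_trans hs.2 h2x1.le
  have hincr : |∫ t in x..s, r' t| ≤ ε / 3 + ε / 6 := by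
    have h1' : |∫ t in x..s, r' t| ≤ ∫ t in Set.Ioc x s, |r' t| := by
      rw [intervalIntegral.integral_of_le hxs]
      simpa [Real.norm_eq_abs] using
        norm_integral_le_integral_norm (μ := volume.restrict (Set.Ioc x s)) r'
    have h2' : ∫ t in Set.Ioc x s, |r' t| ≤ ∫ t in Set.Ioc x (2 * x), |r' t| :=
      setIntegral_mono_set hbound.abs
        (Eventually.of_forall fun t => abs_nonneg _)
        (HasSubset.Subset.eventuallyLE (Set.Ioc_subset_Ioc le_rfl hs.2))
    have h3' : ∫ t in Set.Ioc x (2 * x), |r' t| ≤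
        ∫ t in Set.Ioc x (2 * x), (lam / 2 * (r' t ^ 2 * t) + 1 / (2 * lam) * (1 / t)) :=
      setIntegral_mono_on hbound.abs hBint measurableSet_Ioc
        (fun t ht => amgm_div (lt_trans hx0 ht.1) hlam)
    have h4' : ∫ t in Set.Ioc x (2 * x), (lam / 2 * (r' t ^ 2 * t) + 1 / (2 * lam) * (1 / t))
        = lam / 2 * (∫ t in Set.Ioc x (2 * x), r' t ^ 2 * t) + 1 / (2 * lam) * L := by
      rw [integral_add (hi2.const_mul _) (hi1t.const_mul _), integral_const_mul,
        integral_const_mul, hIoc_log]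
    have h5' : lam / 2 * (∫ t in Set.Ioc x (2 * x), r' t ^ 2 * t) ≤ ε / 3 := by
      have := mul_le_mul_of_nonneg_left hIoc_sq (by positivity : (0:ℝ) ≤ lam / 2)
      calc lam / 2 * (∫ t in Set.Ioc x (2 * x), r' t ^ 2 * t)
          ≤ lam / 2 * (2 * ε / (3 * lam)) := this
        _ = ε / 3 := by field_simp
    have h6' : 1 / (2 * lam) * L = ε / 6 := by
      rw [hlamdef]
      field_simp
      ring
    linarith
  have hftc' := hftc x s hx0 hxs hs1
  rw [Real.dist_eq, sub_zero]
  have : |r x| ≤ |r s| + |r s - r x| := by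
    calc |r x| = |r s - (r s - r x)| := by ring_nf
      _ ≤ |r s| + |r s - r x| := abs_sub _ _
  rw [hftc'] at this
  linarith [this, hrs, hincr]
end
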